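/- (C3BF validity for the point-mass double integrator.) Let p, v ∈ ℝ² with ‖p‖ > r > 0 and v ≠ 0, and define w = p + (√(‖p‖² − r²)/‖v‖)·v. For the double integrator ṗ_rel = v_rel, v̇_rel = −u, the input-dependent part of the derivative of the collision cone CBF h = ⟨p, v⟩ + ‖v‖√(‖p‖² − r²) is ⟨w, −u⟩. Since w ≠ 0, for every real number c there exists u ∈ ℝ² with c + ⟨w, −u⟩ ≥ 0; hence the CBF condition sup_{u} [ḣ(x,u) + κ(h)] ≥ 0 holds at every state with ‖p‖ > r and v ≠ 0. -/

import Mathlib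

open scoped RealInnerProductSpace

/-! The velocity term of `w` has norm at most `√(‖p‖² − r²) < ‖p‖`, so it cannot cancel `p`
and `w ≠ 0`. The input enters `ḣ` through the nonzero linear functional `u ↦ ⟪w, −u⟫`, which
is onto `ℝ` and can therefore offset any drift term `c`. -/

theorem Real.sqrt_sq_sub_sq_lt {a r : ℝ} (hr : 0 < r) (hra : r < a) :
    √(a ^ 2 - r ^ 2) < a :=
  (Real.sqrt_lt' (hr.trans hra)).2 (by nlinarith)

theorem norm_div_norm_smul_le {E : Type*} [SeminormedAddCommGroup E] [NormedSpace ℝ E]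
    (s : ℝ) (v : E) : ‖(s / ‖v‖) • v‖ ≤ |s| := by
  rcases eq_or_ne ‖v‖ 0 with hv | hv
  · simp [hv]
  · rw [norm_smul, norm_div, norm_norm, div_mul_cancel₀ _ hv, Real.norm_eq_abs]

theorem add_ne_zero_of_norm_lt {E : Type*} [SeminormedAddGroup E] {p q : E}
    (h : ‖q‖ < ‖p‖) : p + q ≠ 0 := by
  intro hpq
  rw [eq_neg_of_add_eq_zero_right hpq, norm_neg] at h
  exact h.false

theorem exists_inner_eq_of_ne_zero {E : Type*} [NormedAddCommGroup E] [InnerProductSpace ℝ E]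
    {w : E} (hw : w ≠ 0) (t : ℝ) : ∃ u : E, ⟪w, u⟫ = t :=
  ⟨(t / ⟪w, w⟫) • w, by
    rw [inner_smul_right, div_mul_cancel₀ _ (inner_self_ne_zero.2 hw)]⟩

theorem c3bf_double_integrator_valid_general
    (p v : EuclideanSpace ℝ (Fin 2)) (r : ℝ)
    (hr : 0 < r) (hp : r < ‖p‖) :
    p + (Real.sqrt (‖p‖ ^ 2 - r ^ 2) / ‖v‖) • v ≠ 0 ∧
      ∀ c : ℝ, ∃ u : EuclideanSpace ℝ (Fin 2),
        0 ≤ c + ⟪p + (Real.sqrt (‖p‖ ^ 2 - r ^ 2) / ‖v‖) • v, -u⟫ := by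
  have hw : p + (Real.sqrt (‖p‖ ^ 2 - r ^ 2) / ‖v‖) • v ≠ 0 := by
    refine add_ne_zero_of_norm_lt ((norm_div_norm_smul_le _ v).trans_lt ?_)
    rw [abs_of_nonneg (Real.sqrt_nonneg _)]
    exact Real.sqrt_sq_sub_sq_lt hr hp
  refine ⟨hw, fun c => ?_⟩
  obtain ⟨u, hu⟩ := exists_inner_eq_of_ne_zero hw (-c)
  exact ⟨-u, by rw [neg_neg, hu, add_neg_cancel]⟩

/-- C3BF validity for the point-mass double integrator: with
`w = p + (√(‖p‖² − r²)/‖v‖) • v`, one has `w ≠ 0`, and hence for every `c : ℝ`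
there is an input `u ∈ ℝ²` with `c + ⟪w, −u⟫ ≥ 0`, so the CBF condition holds at
every state with `‖p‖ > r` and `v ≠ 0`. -/
theorem c3bf_double_integrator_valid
    (p v : EuclideanSpace ℝ (Fin 2)) (r : ℝ)
    (hr : 0 < r) (hp : r < ‖p‖) (hv : v ≠ 0) :
    p + (Real.sqrt (‖p‖ ^ 2 - r ^ 2) / ‖v‖) • v ≠ 0 ∧
      ∀ c : ℝ, ∃ u : EuclideanSpace ℝ (Fin 2),
        0 ≤ c + ⟪p + (Real.sqrt (‖p‖ ^ 2 - r ^ 2) / ‖v‖) • v, -u⟫ :=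
  c3bf_double_integrator_valid_general p v r hr hp
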